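/- arXiv:2512.17633 — 6 statements merged into one kernel-verified Lean document; each statement's English description precedes it below -/
import Mathlib

section
/- There exists a constant C = C(k) such that the following holds. Let p > k be prime, let V be a finite-dimensional F_p-vector space, let Q : V → F_p be a polynomial of degree k with bias L_Q ≥ c, and let ε > 0. Then there exist a natural number m ≤ (εc/2)^{−C}, complex coefficients c_1, …, c_m with Σ_{i∈[m]} |c_i| ≤ c^{−1}, and polynomials R_1, …, R_m : V → F_p of degree at most k−1 such that ‖χ ∘ Q − Σ_{i∈[m]} c_i · (χ ∘ R_i)‖_{L²} ≤ ε. -/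
open scoped BigOperators

/-- The standard additive character of `ZMod p`. -/
noncomputable def chi (p : ℕ) (a : ZMod p) : ℂ :=
  Complex.exp (2 * Real.pi * Complex.I * (a.val : ℂ) / (p : ℂ))

/-- Expectation (uniform average) of a complex-valued function on a finite type. -/
noncomputable def expAvg {X : Type*} [Fintype X] (F : X → ℂ) : ℂ :=
  (∑ x : X, F x) / (Fintype.card X : ℂ)

/-- The bias of a map into `ZMod p` (a real number: for multilinear forms the
average of the character is a nonnegative real). -/
noncomputable def biasF {p : ℕ} {X : Type*} [Fintype X] (α : X → ZMod p) : ℝ :=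
  (expAvg fun x => chi p (α x)).re

/-- The (normalized) `L²` norm of a complex-valued function on a finite type. -/
noncomputable def L2norm {X : Type*} [Fintype X] (F : X → ℂ) : ℝ :=
  Real.sqrt ((∑ x : X, ‖F x‖ ^ 2) / (Fintype.card X : ℝ))

/-- `Q : V → ZMod p` is a polynomial of degree at most `k`: in the coordinates given by
some (equivalently, any) basis it is given by a polynomial of (total) degree at most `k`. -/
def IsPolyDegLE (p : ℕ) {V : Type*} [AddCommGroup V] [Module (ZMod p) V]
    (k : ℕ) (Q : V → ZMod p) : Prop :=
  ∃ (n : ℕ) (e : V ≃ₗ[ZMod p] (Fin n → ZMod p)) (P : MvPolynomial (Fin n) (ZMod p)),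
    P.totalDegree ≤ k ∧ ∀ v : V, Q v = MvPolynomial.eval (e v) P

/-- The iterated discrete derivative `Δ_{a 1} ⋯ Δ_{a k} Q (x)`, where
`Δ_a Q (x) = Q (x + a) - Q (x)`. -/
noncomputable def discDeriv {p : ℕ} {V : Type*} [AddCommGroup V] (k : ℕ)
    (Q : V → ZMod p) (a : Fin k → V) (x : V) : ZMod p :=
  ∑ S : Finset (Fin k), (-1 : ZMod p) ^ (k - S.card) * Q (x + ∑ i ∈ S, a i)

/-- The symmetric multilinear form associated to a polynomial `Q` of degree `k` (for `p > k`):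
`L_Q (a_1, …, a_k) = (k!)⁻¹ Δ_{a_1} ⋯ Δ_{a_k} Q (x)`, which is independent of `x`
(we take `x = 0`). -/
noncomputable def LQ {p : ℕ} {V : Type*} [AddCommGroup V] (k : ℕ)
    (Q : V → ZMod p) (a : Fin k → V) : ZMod p :=
  (Nat.factorial k : ZMod p)⁻¹ * discDeriv k Q a 0

/-!
For `y ∈ V^k` put `R_y x = Q x - L_Q(y₁ + x, …, y_k + x)`. Expanding the iterated difference,
`L_Q(y + x) = (k!)⁻¹ ∑_S (-1)^(k-|S|) Q(|S| x + y_S)`, whose degree-`k` part is that of `Q`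
times `(k!)⁻¹ ∑_S (-1)^(k-|S|) |S|^k = 1` (the `k`-th finite difference of `t ↦ t^k`); hence
`deg R_y ≤ k - 1`. Since `χ(L_Q(y + x)) = χ(Q x) · conj χ(R_y x)`, summing over `y` and using
invariance under the shift `y ↦ y + x` gives `χ(Q x) = 𝔼_y β χ(R_y x)` with
`β = (conj 𝔼 χ ∘ L_Q)⁻¹`, so `|β| ≤ c⁻¹`. By Maurey's empirical method some `m` samples `y`
do at least as well as the average over independent samples, whose squared `L²` error is at
most `(1 + |β|)² / m`; taking `m ≈ (2 / (ε c))²` gives error `ε`.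
-/

open scoped Nat

namespace MvPolynomial

variable {σ R : Type*} [CommRing R]

theorem coeff_bind₁_C_mul_X_add_C_monomial [DecidableEq σ] (t : R) (a : σ → R) (s u : σ →₀ ℕ)
    (hsu : s.degree ≤ u.degree) :
    coeff u (bind₁ (fun i => C t * X i + C (a i)) (monomial s 1)) =
      if u = s then t ^ s.degree else 0 := by
  induction hd : s.degree generalizing s u with
  | zero =>
    rw [Finsupp.degree_eq_zero_iff] at hd
    subst hd
    simp [coeff_one, eq_comm]
  | succ d ih =>
    obtain ⟨n, hn⟩ : ∃ n, s n ≠ 0 := by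
      by_contra! h
      simp [show s = 0 from Finsupp.ext h] at hd
    have hle : Finsupp.single n 1 ≤ s := Finsupp.single_le_iff.2 (Nat.one_le_iff_ne_zero.2 hn)
    set s' := s - Finsupp.single n 1
    have hs : s = s' + Finsupp.single n 1 := (tsub_add_cancel_of_le hle).symm
    have hs' : s'.degree = d := by
      have := congrArg Finsupp.degree hs
      simp only [map_add, Finsupp.degree_single] at this
      omega
    have hu : s' ≠ u := fun h => by subst h; omega
    conv_lhs => rw [hs, monomial_add_single, pow_one, map_mul, bind₁_X_right, mul_add, coeff_add,
      ← mul_assoc, mul_comm _ (C t), mul_assoc, mul_comm _ (C (a n)), coeff_C_mul, coeff_C_mul,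
      coeff_mul_X', ih s' u (by omega) hs', if_neg (Ne.symm hu), mul_zero, add_zero]
    by_cases hnu : n ∈ u.support
    · have hnu' : Finsupp.single n 1 ≤ u :=
        Finsupp.single_le_iff.2 (Nat.one_le_iff_ne_zero.2 (Finsupp.mem_support_iff.1 hnu))
      have hdeg : (u - Finsupp.single n 1).degree + 1 = u.degree := by
        simpa using congrArg Finsupp.degree (tsub_add_cancel_of_le hnu')
      have hiff : u - Finsupp.single n 1 = s' ↔ u = s :=
        ⟨fun h => by rw [hs, ← h, tsub_add_cancel_of_le hnu'],
          fun h => by rw [h, hs, add_tsub_cancel_right]⟩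
      rw [if_pos hnu, ih s' _ (by omega) hs']
      simp only [hiff]
      split_ifs <;> ring
    · have hus : u ≠ s := fun h => hnu (by rw [h]; exact Finsupp.mem_support_iff.2 hn)
      rw [if_neg hnu, if_neg hus, mul_zero]

theorem coeff_bind₁_C_mul_X_add_C (t : R) (a : σ → R) {P : MvPolynomial σ R} {k : ℕ}
    (hP : P.totalDegree ≤ k) {u : σ →₀ ℕ} (hu : k ≤ u.degree) :
    coeff u (bind₁ (fun i => C t * X i + C (a i)) P) = t ^ k * coeff u P := by
  classical
  have hmon : ∀ v ∈ P.support, coeff u (bind₁ (fun i => C t * X i + C (a i))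
      (monomial v (coeff v P))) = if u = v then coeff v P * t ^ v.degree else 0 := by
    intro v hv
    rw [← mul_one (coeff v P), ← C_mul_monomial, map_mul, bind₁_C_right, coeff_C_mul,
      coeff_bind₁_C_mul_X_add_C_monomial t a v u ((le_totalDegree hv).trans (hP.trans hu))]
    split_ifs <;> ring
  conv_lhs => rw [P.as_sum, map_sum, coeff_sum, Finset.sum_congr rfl hmon,
    Finset.sum_ite_eq]
  split_ifs with huP
  · have huk : u.degree = k := le_antisymm ((le_totalDegree huP).trans hP) hu
    rw [huk, mul_comm]
  · rw [notMem_support_iff.1 huP, mul_zero]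

theorem totalDegree_le_pred_of_coeff_eq_zero {F : MvPolynomial σ R} {k : ℕ}
    (h : ∀ u : σ →₀ ℕ, k ≤ u.degree → coeff u F = 0) : F.totalDegree ≤ k - 1 :=
  Finset.sup_le fun u hu => by
    by_contra! hlt
    exact mem_support_iff.1 hu (h u (by change k ≤ u.sum fun _ e => e; omega))

theorem totalDegree_bind₁_C_mul_X_add_C_sub_le (t : R) (a : σ → R) {P : MvPolynomial σ R}
    {k : ℕ} (hP : P.totalDegree ≤ k) :
    (bind₁ (fun i => C t * X i + C (a i)) P - t ^ k • P).totalDegree ≤ k - 1 :=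
  totalDegree_le_pred_of_coeff_eq_zero fun u hu => by
    rw [coeff_sub, coeff_smul, coeff_bind₁_C_mul_X_add_C t a hP hu, smul_eq_mul, sub_self]

end MvPolynomial

theorem sum_neg_one_pow_mul_card_pow {R : Type*} [CommRing R] (k : ℕ) :
    ∑ S : Finset (Fin k), (-1 : R) ^ (k - S.card) * (S.card : R) ^ k = k ! := by
  have hdiff := fwdDiff_iter_eq_sum_shift (1 : R) (fun r => r ^ k) k 0
  rw [fwdDiff_iter_eq_factorial] at hdiff
  rw [← Finset.powerset_univ,
    Finset.sum_powerset_apply_card (fun m => (-1 : R) ^ (k - m) * (m : R) ^ k),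
    Finset.card_univ, Fintype.card_fin]
  simp only [Pi.natCast_apply] at hdiff
  rw [hdiff]
  refine Finset.sum_congr rfl fun m _ => ?_
  simp only [zero_add, nsmul_eq_mul, mul_one, zsmul_eq_mul]
  push_cast
  ring

section Polynomials

open MvPolynomial

variable {p : ℕ} {V : Type*} [AddCommGroup V] [Module (ZMod p) V]

theorem IsPolyDegLE.sub_sum_comp_smul_add {k : ℕ} {Q : V → ZMod p} (hQ : IsPolyDegLE p k Q)
    {ι : Type*} (s : Finset ι) (w t : ι → ZMod p) (a : ι → V)
    (hw : ∑ i ∈ s, w i * t i ^ k = 1) :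
    IsPolyDegLE p (k - 1) fun x => Q x - ∑ i ∈ s, w i * Q (t i • x + a i) := by
  obtain ⟨n, e, P, hP, hQP⟩ := hQ
  have hshift : ∀ i x, eval (e x) (bind₁ (fun j => C (t i) * X j + C (e (a i) j)) P) =
      Q (t i • x + a i) := fun i x => by
    rw [hQP, eval, eval₂Hom_bind₁]
    congr 2
    funext j
    simp
  refine ⟨n, e, ∑ i ∈ s, w i • (t i ^ k • P - bind₁ (fun j => C (t i) * X j + C (e (a i) j)) P),
    ?_, fun x => ?_⟩
  · refine totalDegree_finsetSum_le fun i _ => (totalDegree_smul_le _ _).trans ?_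
    rw [← neg_sub, totalDegree_neg]
    exact totalDegree_bind₁_C_mul_X_add_C_sub_le _ _ hP
  · simp only [map_sum, smul_eval, map_sub, hshift, ← hQP x, mul_sub, Finset.sum_sub_distrib,
      ← mul_assoc, ← Finset.sum_mul, hw, one_mul]

theorem LQ_add_const (k : ℕ) (Q : V → ZMod p) (y : Fin k → V) (x : V) :
    LQ k Q (fun i => y i + x) = ∑ S : Finset (Fin k),
      ((k ! : ZMod p)⁻¹ * (-1) ^ (k - S.card)) * Q ((S.card : ZMod p) • x + ∑ i ∈ S, y i) := by
  simp only [LQ, discDeriv, Finset.mul_sum, mul_assoc, zero_add, Finset.sum_add_distrib,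
    Finset.sum_const, Nat.cast_smul_eq_nsmul, add_comm (_ • x)]

theorem IsPolyDegLE.sub_LQ_add_const [Fact p.Prime] {k : ℕ} (hkp : k < p) {Q : V → ZMod p}
    (hQ : IsPolyDegLE p k Q) (y : Fin k → V) :
    IsPolyDegLE p (k - 1) fun x => Q x - LQ k Q (fun i => y i + x) := by
  have hk : (k ! : ZMod p) ≠ 0 := by
    rw [Ne, ZMod.natCast_eq_zero_iff, (Fact.out : p.Prime).dvd_factorial]
    omega
  simp only [LQ_add_const]
  refine hQ.sub_sum_comp_smul_add _ _ _ _ ?_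
  simp only [mul_assoc, ← Finset.mul_sum, sum_neg_one_pow_mul_card_pow, inv_mul_cancel₀ hk]

end Polynomials

theorem chi_eq_stdAddChar {p : ℕ} [NeZero p] (a : ZMod p) : chi p a = ZMod.stdAddChar a := by
  rw [ZMod.stdAddChar_apply, ZMod.toCircle_apply]
  rfl

theorem sum_addChar_sub_comp_add {G Y : Type*} [AddCommGroup G] [Finite G] [AddCommGroup Y]
    [Fintype Y] (ψ : AddChar G ℂ) (q : G) (L : Y → G) (z : Y) :
    ∑ y, ψ (q - L (y + z)) = ψ q * starRingEnd ℂ (∑ y, ψ (L y)) := by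
  simp only [sub_eq_add_neg, AddChar.map_add_eq_mul, AddChar.map_neg_eq_conj, ← Finset.mul_sum,
    map_sum]
  exact congrArg _ (Fintype.sum_equiv (Equiv.addRight z) _ _ fun _ => rfl)

theorem norm_chi {p : ℕ} [NeZero p] (a : ZMod p) : ‖chi p a‖ = 1 := by
  rw [chi_eq_stdAddChar, AddChar.norm_apply]

theorem norm_expAvg_le_one {X : Type*} [Fintype X] {F : X → ℂ} (hF : ∀ x, ‖F x‖ ≤ 1) :
    ‖expAvg F‖ ≤ 1 := by
  rw [expAvg, norm_div, Complex.norm_natCast]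
  refine div_le_one_of_le₀ ((norm_sum_le _ _).trans ?_) (Nat.cast_nonneg _)
  simpa using Finset.sum_le_card_nsmul Finset.univ _ 1 fun x _ => hF x

theorem exists_sq_norm_nsmul_sub_sum_le (𝕜 : Type*) {E Y : Type*} [RCLike 𝕜]
    [NormedAddCommGroup E] [InnerProductSpace 𝕜 E] [Fintype Y] [Nonempty Y] {f : E}
    {u : Y → E} (hf : Fintype.card Y • f = ∑ y, u y) {A : ℝ} (hA : ∀ y, ‖f - u y‖ ^ 2 ≤ A)
    (m : ℕ) : ∃ w : Fin m → Y, ‖m • f - ∑ i, u (w i)‖ ^ 2 ≤ m * A := by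
  induction m with
  | zero => exact ⟨Fin.elim0, by simp⟩
  | succ m ih =>
    obtain ⟨w, hw⟩ := ih
    set D := m • f - ∑ i, u (w i)
    have hcross : ∑ y, RCLike.re (inner 𝕜 D (f - u y)) = 0 := by
      rw [← map_sum, ← inner_sum, Finset.sum_sub_distrib, Finset.sum_const, Finset.card_univ, hf,
        sub_self, inner_zero_right, map_zero]
    have hsum : ∑ y, ‖D + (f - u y)‖ ^ 2 ≤ ∑ _y : Y, ((m + 1 : ℕ) * A) := by
      simp only [norm_add_sq (𝕜 := 𝕜), Finset.sum_add_distrib, ← Finset.mul_sum, hcross]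
      simp only [Finset.sum_const, Finset.card_univ, nsmul_eq_mul, mul_zero, add_zero]
      have hdev : ∑ y, ‖f - u y‖ ^ 2 ≤ Fintype.card Y * A := by
        simpa using Finset.sum_le_card_nsmul Finset.univ _ A fun y _ => hA y
      push_cast
      linarith [mul_le_mul_of_nonneg_left hw (Nat.cast_nonneg (α := ℝ) (Fintype.card Y))]
    obtain ⟨y, -, hy⟩ := Finset.exists_le_of_sum_le Finset.univ_nonempty hsum
    refine ⟨Fin.snoc w y, Eq.trans_le ?_ hy⟩
    rw [Fin.sum_univ_castSucc]
    simp only [Fin.snoc_castSucc, Fin.snoc_last, D, succ_nsmul]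
    congr 2
    abel


theorem exists_L2norm_sub_average_le {V Y : Type*} [Fintype V] [Fintype Y] [Nonempty Y]
    {f : V → ℂ} {u : Y → V → ℂ} (hf : ∀ x, (Fintype.card Y : ℂ) * f x = ∑ y, u y x)
    {M : ℝ} (hM0 : 0 ≤ M) (hM : ∀ y x, ‖f x - u y x‖ ≤ M) {m : ℕ} (hm : 0 < m) :
    ∃ w : Fin m → Y, L2norm (fun x => f x - ∑ i, (m : ℂ)⁻¹ * u (w i) x) ≤ M / √m := by
  let F : EuclideanSpace ℂ V := WithLp.toLp 2 f
  let U : Y → EuclideanSpace ℂ V := fun y => WithLp.toLp 2 (u y)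
  have hF : Fintype.card Y • F = ∑ y, U y := by
    ext x
    simp [F, U, hf, nsmul_eq_mul]
  have hU : ∀ y, ‖F - U y‖ ^ 2 ≤ Fintype.card V * M ^ 2 := fun y => by
    rw [EuclideanSpace.norm_sq_eq]
    simpa using Finset.sum_le_card_nsmul Finset.univ _ (M ^ 2) fun x _ =>
      pow_le_pow_left₀ (norm_nonneg _) (hM y x) 2
  obtain ⟨w, hw⟩ := exists_sq_norm_nsmul_sub_sum_le ℂ hF hU m
  have hm' : (m : ℂ) ≠ 0 := by exact_mod_cast hm.ne'
  have hsum : ∑ x, ‖f x - ∑ i, (m : ℂ)⁻¹ * u (w i) x‖ ^ 2 =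
      ‖m • F - ∑ i, U (w i)‖ ^ 2 / m ^ 2 := by
    rw [EuclideanSpace.norm_sq_eq, Finset.sum_div]
    refine Finset.sum_congr rfl fun x _ => ?_
    rw [← Finset.mul_sum, show f x - (m : ℂ)⁻¹ * ∑ i, u (w i) x =
      (m : ℂ)⁻¹ * (m * f x - ∑ i, u (w i) x) by field_simp]
    simp [F, U, nsmul_eq_mul, div_eq_inv_mul, mul_pow]
  refine ⟨w, ?_⟩
  calc L2norm (fun x => f x - ∑ i, (m : ℂ)⁻¹ * u (w i) x)
      ≤ √(M ^ 2 / m) := by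
        refine Real.sqrt_le_sqrt (div_le_of_le_mul₀ (Nat.cast_nonneg _) (by positivity) ?_)
        rw [hsum, div_le_iff₀ (by positivity)]
        calc ‖m • F - ∑ i, U (w i)‖ ^ 2 ≤ m * (Fintype.card V * M ^ 2) := hw
          _ = M ^ 2 / m * Fintype.card V * m ^ 2 := by field_simp
    _ = M / √m := by rw [Real.sqrt_div' _ (Nat.cast_nonneg _), Real.sqrt_sq hM0]

theorem L2norm_eq_one {V : Type*} [Fintype V] [Nonempty V] {F : V → ℂ}
    (hF : ∀ x, ‖F x‖ = 1) : L2norm F = 1 := by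
  simp [L2norm, hF]

theorem card_mul_chi_eq_sum {p : ℕ} [NeZero p] {V : Type*} [AddCommGroup V] [Fintype V] {k : ℕ}
    (Q : V → ZMod p) (hb : expAvg (fun y : Fin k → V => chi p (LQ k Q y)) ≠ 0) (x : V) :
    (Fintype.card (Fin k → V) : ℂ) * chi p (Q x) =
      ∑ y : Fin k → V, (starRingEnd ℂ (expAvg fun y : Fin k → V => chi p (LQ k Q y)))⁻¹ *
        chi p (Q x - LQ k Q (fun i => y i + x)) := by
  simp only [chi_eq_stdAddChar] at hb ⊢
  have hshift : ∑ y : Fin k → V, ZMod.stdAddChar (Q x - LQ k Q (fun i => y i + x)) =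
      ZMod.stdAddChar (Q x) * starRingEnd ℂ (∑ y, ZMod.stdAddChar (LQ k Q y)) :=
    sum_addChar_sub_comp_add _ (Q x) (LQ k Q) (fun _ => x)
  rw [expAvg] at hb ⊢
  have hT : starRingEnd ℂ (∑ y : Fin k → V, ZMod.stdAddChar (LQ k Q y)) ≠ 0 := by
    rw [Ne, map_eq_zero]
    exact (div_ne_zero_iff.1 hb).1
  rw [← Finset.mul_sum, hshift, map_div₀, map_natCast]
  field_simp

theorem exists_L2norm_chi_sub_sum_le {p : ℕ} [Fact p.Prime] {V : Type*} [AddCommGroup V]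
    [Module (ZMod p) V] [Fintype V] {k : ℕ} (hkp : k < p) {Q : V → ZMod p}
    (hQ : IsPolyDegLE p k Q) {c : ℝ} (hc : 0 < c)
    (hcb : c ≤ ‖expAvg fun y : Fin k → V => chi p (LQ k Q y)‖) {m : ℕ} (hm : 0 < m) :
    ∃ (coef : Fin m → ℂ) (R : Fin m → V → ZMod p), ∑ i, ‖coef i‖ ≤ c⁻¹ ∧
      (∀ i, IsPolyDegLE p (k - 1) (R i)) ∧
      L2norm (fun x => chi p (Q x) - ∑ i, coef i * chi p (R i x)) ≤ (1 + c⁻¹) / √m := by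
  set b := expAvg fun y : Fin k → V => chi p (LQ k Q y)
  have hβ : ‖(starRingEnd ℂ b)⁻¹‖ ≤ c⁻¹ := by
    rw [norm_inv, Complex.norm_conj]
    exact inv_anti₀ hc hcb
  have hM : ∀ (y : Fin k → V) x, ‖chi p (Q x) -
      (starRingEnd ℂ b)⁻¹ * chi p (Q x - LQ k Q (fun i => y i + x))‖ ≤ 1 + c⁻¹ := fun y x => by
    refine (norm_sub_le _ _).trans ?_
    rw [norm_mul, norm_chi, norm_chi, mul_one]
    exact add_le_add_right hβ 1
  obtain ⟨w, hw⟩ := exists_L2norm_sub_average_le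
    (card_mul_chi_eq_sum Q (norm_pos_iff.1 (hc.trans_le hcb))) (by positivity) hM hm
  refine ⟨fun _ => (starRingEnd ℂ b)⁻¹ / m, fun i x => Q x - LQ k Q (fun j => w i j + x), ?_,
    fun i => hQ.sub_LQ_add_const hkp (w i), Eq.trans_le ?_ hw⟩
  · simp only [Finset.sum_const, Finset.card_univ, Fintype.card_fin, nsmul_eq_mul, norm_div,
      Complex.norm_natCast]
    rwa [mul_div_cancel₀ _ (by exact_mod_cast hm.ne')]
  · simp only [div_eq_inv_mul, mul_assoc]
    rfl

theorem natCeil_sq_le_pow_three {r : ℝ} (hr : 2 ≤ r) : (⌈r ^ 2⌉₊ : ℝ) ≤ r ^ 3 := by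
  nlinarith [Nat.ceil_lt_add_one (sq_nonneg r)]

/-- Approximation theorem for biased polynomials: there is `C = C(k)` such
that for any prime `p > k`, any finite-dimensional `F_p`-vector space `V`, any polynomial
`Q : V → F_p` of degree `k` with `bias L_Q ≥ c` and any `ε > 0`, the phase `χ ∘ Q` is
`ε`-close in `L²` to a combination of at most `(εc/2)^{-C}` phases of polynomials of degree
at most `k - 1`, with coefficients summing to at most `c⁻¹` in absolute value. -/
theorem biased_poly_approx (k : ℕ) :
    ∃ C : ℕ, 1 ≤ C ∧
      ∀ (p : ℕ) [Fact p.Prime], k < p →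
        ∀ (V : Type) [AddCommGroup V] [Module (ZMod p) V] [Fintype V],
          ∀ (Q : V → ZMod p) (c ε : ℝ), 0 < c → 0 < ε →
            IsPolyDegLE p k Q → c ≤ biasF (LQ k Q) →
            ∃ (m : ℕ) (coef : Fin m → ℂ) (R : Fin m → V → ZMod p),
              (m : ℝ) ≤ (ε * c / 2)⁻¹ ^ C ∧
              (∑ i, ‖coef i‖) ≤ c⁻¹ ∧
              (∀ i, IsPolyDegLE p (k - 1) (R i)) ∧
              L2norm (fun x : V => chi p (Q x) - ∑ i, coef i * chi p (R i x)) ≤ ε := by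
  refine ⟨3, by norm_num, fun p _ hkp V _ _ _ Q c ε hc hε hQ hbias => ?_⟩
  have hcb : c ≤ ‖expAvg fun y : Fin k → V => chi p (LQ k Q y)‖ :=
    hbias.trans (Complex.re_le_norm _)
  have hc1 : c ≤ 1 := hcb.trans (norm_expAvg_le_one fun _ => (norm_chi _).le)
  rcases le_or_gt 1 ε with hε1 | hε1
  · refine ⟨0, Fin.elim0, Fin.elim0, by rw [Nat.cast_zero]; positivity, by simp [hc.le],
      fun i => i.elim0, ?_⟩
    simpa [L2norm_eq_one (V := V) fun x => norm_chi (Q x)] using hε1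
  set r := (ε * c / 2)⁻¹
  have hr : 2 ≤ r := by
    rw [le_inv_comm₀ two_pos (by positivity)]
    nlinarith
  obtain ⟨coef, R, hcoef, hR, hL2⟩ :=
    exists_L2norm_chi_sub_sum_le hkp hQ hc hcb (Nat.ceil_pos.2 (by positivity : 0 < r ^ 2))
  refine ⟨_, coef, R, natCeil_sq_le_pow_three hr, hcoef, hR, hL2.trans ?_⟩
  calc (1 + c⁻¹) / √⌈r ^ 2⌉₊ ≤ 2 / c / r := by
        gcongr
        · linarith [(one_le_inv₀ hc).2 hc1, div_eq_mul_inv 2 c]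
        · exact Real.le_sqrt_of_sq_le (Nat.le_ceil _)
    _ = ε := by simp only [r, inv_div]; field_simp
end

section
/- Let W ⊆ U_1 × ⋯ × U_k be a multilinear variety of codimension at most r, where U_1, …, U_k are finite-dimensional F_p-vector spaces. Then |W| ≥ p^{−r} · |U_1 × ⋯ × U_k|. -/
open scoped BigOperators

/-- `f` is a multilinear form in the variables indexed by `J` (and does not depend on the
remaining variables). -/
def IsMultilinearIn (p : ℕ) {k : ℕ} {U : Fin k → Type*} [∀ i, AddCommMonoid (U i)]
    [∀ i, Module (ZMod p) (U i)] (J : Finset (Fin k)) (f : (∀ i, U i) → ZMod p) : Prop :=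
  (∀ x y : ∀ i, U i, (∀ i ∈ J, x i = y i) → f x = f y) ∧
  ∀ i ∈ J,
    (∀ (x : ∀ i, U i) (a b : U i),
        f (Function.update x i (a + b)) = f (Function.update x i a) + f (Function.update x i b)) ∧
    (∀ (x : ∀ i, U i) (c : ZMod p) (a : U i),
        f (Function.update x i (c • a)) = c * f (Function.update x i a))

/-- `W` is a multilinear variety of codimension at most `r`: the common zero set of at most
`r` forms, each multilinear in the variables indexed by some nonempty subset of `[k]`. -/
def IsMLVariety (p : ℕ) {k : ℕ} {U : Fin k → Type*} [∀ i, AddCommMonoid (U i)]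
    [∀ i, Module (ZMod p) (U i)] (r : ℕ) (W : Set (∀ i, U i)) : Prop :=
  ∃ (J : Fin r → Finset (Fin k)) (f : Fin r → (∀ i, U i) → ZMod p),
    (∀ j, (J j).Nonempty ∧ IsMultilinearIn p (J j) (f j)) ∧
    W = {x | ∀ j, f j x = 0}


/-! Induct on the set of coordinates the forms may involve. Fix a coordinate `a`. On every line
in direction `a` through a common zero of the forms not involving `a`, the `m` forms that do
involve `a` are additive in the moving coordinate, so their common zeros there form a subgroup
of index at most `p ^ m`. Averaging over these lines, adding those `m` forms shrinks the common
zero set by a factor of at most `p ^ m`. -/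

open Finset Function

theorem sum_card_update_mem {κ : Type*} [DecidableEq κ] [Fintype κ] {β : κ → Type*}
    [∀ i, Fintype (β i)] [∀ i, DecidableEq (β i)] (S : Finset (∀ i, β i)) (a : κ) :
    ∑ x, #{v : β a | update x a v ∈ S} = Fintype.card (β a) * #S := by
  let e : (∀ i, β i) × β a ≃ (∀ i, β i) × β a :=
    { toFun q := (update q.1 a q.2, q.1 a)
      invFun q := (update q.1 a q.2, q.1 a)
      left_inv q := by simp
      right_inv q := by simp }
  calc ∑ x, #{v : β a | update x a v ∈ S}
      = #{q : (∀ i, β i) × β a | update q.1 a q.2 ∈ S} := by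
        simp only [card_filter, Fintype.sum_prod_type]
    _ = #(S ×ˢ univ) := card_equiv e (by simp [e])
    _ = Fintype.card (β a) * #S := by rw [card_product, card_univ, mul_comm]

theorem AddMonoidHom.card_le_card_mul_card_ker {G H : Type*} [AddGroup G] [AddGroup H] [Finite G]
    [Finite H] (φ : G →+ H) : Nat.card G ≤ Nat.card H * Nat.card φ.ker := by
  rw [← φ.ker.card_mul_index, mul_comm, AddSubgroup.index_ker]
  exact Nat.mul_le_mul_right _ (Nat.card_le_card_of_injective _ Subtype.val_injective)

def commonZeros {ι X R : Type*} [Fintype X] [Zero R] [DecidableEq R] (f : ι → X → R)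
    (T : Finset ι) : Finset X :=
  {x | ∀ j ∈ T, f j x = 0}

section Multilinear

variable {p k : ℕ} {U : Fin k → Type*} [∀ i, AddCommGroup (U i)] [∀ i, Module (ZMod p) (U i)]

namespace IsMultilinearIn

variable {J : Finset (Fin k)} {f : (∀ i, U i) → ZMod p} {a : Fin k}

theorem apply_update_of_notMem (hf : IsMultilinearIn p J f) (ha : a ∉ J) (x : ∀ i, U i)
    (v : U a) : f (update x a v) = f x :=
  hf.1 _ _ fun _ hi => update_of_ne (ne_of_mem_of_not_mem hi ha) _ _

theorem apply_update_add (hf : IsMultilinearIn p J f) (ha : a ∈ J) (x : ∀ i, U i) (v w : U a) :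
    f (update x a (v + w)) = f (update x a v) + f (update x a w) :=
  (hf.2 a ha).1 x v w

end IsMultilinearIn

variable [NeZero p] [∀ i, Fintype (U i)] [∀ i, DecidableEq (U i)] {ι : Type*}
  (J : ι → Finset (Fin k)) (f : ι → (∀ i, U i) → ZMod p)

theorem card_le_pow_mul_card_update_mem_commonZeros (T : Finset ι) (a : Fin k)
    (hT : ∀ j ∈ T, IsMultilinearIn p (J j) (f j)) {x : ∀ i, U i}
    (hx : x ∈ commonZeros f {j ∈ T | a ∉ J j}) :
    Fintype.card (U a) ≤ p ^ #{j ∈ T | a ∈ J j} * #{v : U a | update x a v ∈ commonZeros f T} := by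
  let φ : U a →+ ({j ∈ T | a ∈ J j} → ZMod p) :=
    AddMonoidHom.mk' (fun v j => f j (update x a v)) fun v w => funext fun j => by
      obtain ⟨hjT, hja⟩ := mem_filter.1 j.2
      exact (hT j hjT).apply_update_add hja x v w
  have hker : ∀ v, v ∈ φ.ker ↔ update x a v ∈ commonZeros f T := by
    simp only [commonZeros, mem_filter, mem_univ, true_and] at hx ⊢
    refine fun v => ⟨fun hv j hj => ?_, fun hv => funext fun j => hv j (mem_filter.1 j.2).1⟩
    by_cases hja : a ∈ J j
    · exact congrFun hv ⟨j, mem_filter.2 ⟨hj, hja⟩⟩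
    · rw [(hT j hj).apply_update_of_notMem hja]
      exact hx j ⟨hj, hja⟩
  calc Fintype.card (U a)
      ≤ Nat.card ({j ∈ T | a ∈ J j} → ZMod p) * Nat.card φ.ker := by
        simpa only [Nat.card_eq_fintype_card] using φ.card_le_card_mul_card_ker
    _ = p ^ #{j ∈ T | a ∈ J j} * #{v : U a | update x a v ∈ commonZeros f T} := by
        rw [Nat.card_fun, Nat.card_zmod, Nat.card_eq_fintype_card, Fintype.card_coe,
          Nat.card_eq_fintype_card, ← Fintype.card_subtype]
        exact congrArg _ (Fintype.card_congr (Equiv.subtypeEquivRight hker))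

theorem card_commonZeros_le_pow_mul (T : Finset ι) (a : Fin k)
    (hT : ∀ j ∈ T, IsMultilinearIn p (J j) (f j)) :
    #(commonZeros f {j ∈ T | a ∉ J j}) ≤ p ^ #{j ∈ T | a ∈ J j} * #(commonZeros f T) := by
  refine Nat.le_of_mul_le_mul_left ?_ (Fintype.card_pos (α := U a))
  calc Fintype.card (U a) * #(commonZeros f {j ∈ T | a ∉ J j})
      = ∑ _x ∈ commonZeros f {j ∈ T | a ∉ J j}, Fintype.card (U a) := by
        rw [sum_const, smul_eq_mul, mul_comm]
    _ ≤ ∑ x ∈ commonZeros f {j ∈ T | a ∉ J j},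
          p ^ #{j ∈ T | a ∈ J j} * #{v : U a | update x a v ∈ commonZeros f T} :=
        sum_le_sum fun _ hx => card_le_pow_mul_card_update_mem_commonZeros J f T a hT hx
    _ ≤ ∑ x, p ^ #{j ∈ T | a ∈ J j} * #{v : U a | update x a v ∈ commonZeros f T} :=
        sum_le_sum_of_subset (subset_univ _)
    _ = Fintype.card (U a) * (p ^ #{j ∈ T | a ∈ J j} * #(commonZeros f T)) := by
        rw [← mul_sum, sum_card_update_mem, mul_left_comm]

theorem card_le_pow_mul_card_commonZeros (s : Finset (Fin k)) (T : Finset ι)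
    (hT : ∀ j ∈ T, (J j).Nonempty ∧ J j ⊆ s ∧ IsMultilinearIn p (J j) (f j)) :
    Fintype.card (∀ i, U i) ≤ p ^ #T * #(commonZeros f T) := by
  induction s using Finset.induction_on generalizing T with
  | empty =>
    obtain rfl : T = ∅ := eq_empty_of_forall_notMem fun j hj =>
      (hT j hj).1.ne_empty (subset_empty.1 (hT j hj).2.1)
    simp [commonZeros]
  | insert a s ha ih =>
    have hTS : ∀ j ∈ {j ∈ T | a ∉ J j},
        (J j).Nonempty ∧ J j ⊆ s ∧ IsMultilinearIn p (J j) (f j) := by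
      intro j hj
      obtain ⟨hjT, hja⟩ := mem_filter.1 hj
      obtain ⟨hne, hsub, hf⟩ := hT j hjT
      exact ⟨hne, fun i hi => (mem_insert.1 (hsub hi)).resolve_left (ne_of_mem_of_not_mem hi hja),
        hf⟩
    calc Fintype.card (∀ i, U i)
        ≤ p ^ #{j ∈ T | a ∉ J j} * #(commonZeros f {j ∈ T | a ∉ J j}) := ih _ hTS
      _ ≤ p ^ #{j ∈ T | a ∉ J j} * (p ^ #{j ∈ T | a ∈ J j} * #(commonZeros f T)) :=
        Nat.mul_le_mul_left _ (card_commonZeros_le_pow_mul J f T a fun j hj => (hT j hj).2.2)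
      _ = p ^ #T * #(commonZeros f T) := by
        rw [← mul_assoc, ← pow_add, add_comm, card_filter_add_card_filter_not]

end Multilinear

/-- A multilinear variety of codimension at most `r` in `U_1 × ⋯ × U_k`
has density at least `p^{-r}`. -/
theorem variety_density (p : ℕ) [Fact p.Prime] (k r : ℕ) (U : Fin k → Type)
    [∀ i, AddCommGroup (U i)] [∀ i, Module (ZMod p) (U i)] [∀ i, Fintype (U i)]
    (W : Set (∀ i, U i)) (hW : IsMLVariety p r W) :
    (p : ℝ)⁻¹ ^ r * (Fintype.card (∀ i, U i) : ℝ) ≤ (W.ncard : ℝ) := by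
  classical
  obtain ⟨J, f, hJf, rfl⟩ := hW
  have hcard := card_le_pow_mul_card_commonZeros J f univ univ fun j _ =>
    ⟨(hJf j).1, subset_univ _, (hJf j).2⟩
  have hncard : {x | ∀ j, f j x = 0}.ncard = #(commonZeros f univ) := by
    rw [← Set.ncard_coe_finset]
    congr
    ext
    simp [commonZeros]
  rw [card_univ, Fintype.card_fin] at hcard
  rw [hncard, inv_pow, inv_mul_le_iff₀ (by have := NeZero.pos p; positivity)]
  exact_mod_cast hcard
end

section
/- Let V_1, …, V_k be finite-dimensional F_p-vector spaces and let U_i ≤ V_i be subspaces for each i ∈ [k]. Let α : V_1 × ⋯ × V_k → F_p be a multilinear form and let β : U_1 × ⋯ × U_k → F_p be its restriction. Then bias β ≥ bias α. -/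
open scoped BigOperators

lemma chi_zero (p : ℕ) [NeZero p] : chi p 0 = 1 := by
  simp [chi, ZMod.val_zero]

lemma chi_add {p : ℕ} [NeZero p] (a b : ZMod p) : chi p (a + b) = chi p a * chi p b := by
  unfold chi
  rw [← Complex.exp_add, Complex.exp_eq_exp_iff_exists_int]
  have hp : (p : ℂ) ≠ 0 := Nat.cast_ne_zero.2 (NeZero.ne p)
  refine ⟨-(((a.val + b.val) / p : ℕ) : ℤ), ?_⟩
  have h2 : ((a.val + b.val) % p : ℕ) + (p : ℕ) * ((a.val + b.val) / p : ℕ)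
      = (a.val + b.val : ℕ) := Nat.mod_add_div _ _
  have h2' : (((a.val + b.val) % p : ℕ) : ℂ) + (p : ℂ) * (((a.val + b.val) / p : ℕ) : ℂ)
      = (a.val : ℂ) + (b.val : ℂ) := by exact_mod_cast congrArg (Nat.cast (R := ℂ)) h2
  have hv : (((a + b).val : ℕ) : ℂ)
      = (a.val : ℂ) + (b.val : ℂ) - (p : ℂ) * (((a.val + b.val) / p : ℕ) : ℂ) := by
    rw [ZMod.val_add]
    linear_combination h2'
  rw [hv, Int.cast_neg, Int.cast_natCast]
  field_simp
  ring

lemma chi_ne_one {p : ℕ} [Fact p.Prime] {a : ZMod p} (ha : a ≠ 0) : chi p a ≠ 1 := by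
  haveI : NeZero p := ⟨(Fact.out : p.Prime).ne_zero⟩
  have hp : (p : ℂ) ≠ 0 := Nat.cast_ne_zero.2 (NeZero.ne p)
  unfold chi
  intro hcon
  rw [Complex.exp_eq_one_iff] at hcon
  obtain ⟨n, hn⟩ := hcon
  have hπ : (Real.pi : ℂ) ≠ 0 := by exact_mod_cast Real.pi_ne_zero
  have h22 : (2 : ℂ) * Real.pi * Complex.I ≠ 0 := by
    simp [Complex.I_ne_zero, hπ]
  rw [div_eq_iff hp] at hn
  have h2 : (a.val : ℂ) = (n : ℂ) * p :=
    mul_left_cancel₀ h22 (hn.trans (by ring))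
  have h3 : (a.val : ℤ) = n * p := by exact_mod_cast h2
  have hdvd : (p : ℕ) ∣ a.val := by
    have : (p : ℤ) ∣ (a.val : ℤ) := ⟨n, by linarith [h3]⟩
    exact_mod_cast this
  have hvlt : a.val < p := ZMod.val_lt a
  have hvne : a.val ≠ 0 := fun h => ha ((ZMod.val_eq_zero a).1 h)
  have := Nat.le_of_dvd (Nat.pos_of_ne_zero hvne) hdvd
  omega

lemma sum_chi {p : ℕ} [Fact p.Prime] {W : Type*} [AddCommGroup W] [Module (ZMod p) W]
    [Fintype W] (ℓ : W →ₗ[ZMod p] ZMod p) :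
    ∑ w : W, chi p (ℓ w) = if ∀ w, ℓ w = 0 then (Fintype.card W : ℂ) else 0 := by
  haveI : NeZero p := ⟨(Fact.out : p.Prime).ne_zero⟩
  split_ifs with h
  · simp [h, chi_zero]
  · push_neg at h
    obtain ⟨w0, hw0⟩ := h
    have key : chi p (ℓ w0) * ∑ w : W, chi p (ℓ w) = ∑ w : W, chi p (ℓ w) := by
      rw [Finset.mul_sum]
      calc ∑ w : W, chi p (ℓ w0) * chi p (ℓ w)
          = ∑ w : W, chi p (ℓ (w0 + w)) := by
            refine Finset.sum_congr rfl fun w _ => ?_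
            rw [map_add, chi_add]
        _ = ∑ w : W, chi p (ℓ w) :=
            Fintype.sum_equiv (Equiv.addLeft w0) _ _ (fun w => by simp)
    have h0 : (chi p (ℓ w0) - 1) * ∑ w : W, chi p (ℓ w) = 0 := by linear_combination key
    rcases mul_eq_zero.1 h0 with h1 | h2
    · exact absurd (by linear_combination h1) (chi_ne_one hw0)
    · exact h2

lemma biasF_comp_equiv {p : ℕ} {X Y : Type*} [Fintype X] [Fintype Y] (e : X ≃ Y)
    (f : Y → ZMod p) : biasF (fun x => f (e x)) = biasF f := by
  unfold biasF expAvg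
  rw [Equiv.sum_comp e (fun y => chi p (f y)), Fintype.card_congr e]

lemma biasF_instIrrel {p : ℕ} {X : Type*} (i1 i2 : Fintype X) (f : X → ZMod p) :
    @biasF p X i1 f = @biasF p X i2 f := by
  rw [Subsingleton.elim i1 i2]

section Main

open scoped Classical

attribute [local instance 10] Fintype.ofFinite

variable {p k : ℕ} [Fact p.Prime] {V : Fin k → Type}
  [∀ i, AddCommGroup (V i)] [∀ i, Module (ZMod p) (V i)] [∀ i, Fintype (V i)]
  (α : MultilinearMap (ZMod p) V (ZMod p))

/-- Bias of the restriction of `α` to a family of submodules. -/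
noncomputable def B (s : ∀ i, Submodule (ZMod p) (V i)) : ℝ :=
  biasF (fun x : ∀ i, s i => α fun i => (x i : V i))

/-- Extension of an "outer" point (all coordinates except `i0`) by `0` at `i0`. -/
noncomputable def base (s : ∀ i, Submodule (ZMod p) (V i)) (i0 : Fin k)
    (y : ∀ j : {j : Fin k // j ≠ i0}, s j.val) : ∀ j, V j :=
  fun j => if h : j = i0 then 0 else ((y ⟨j, h⟩ : V j))

lemma B_formula (s : ∀ i, Submodule (ZMod p) (V i)) (i0 : Fin k) :
    B α s = (∑ y : ∀ j : {j : Fin k // j ≠ i0}, s j.val,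
        if ∀ v ∈ s i0, α.toLinearMap (base s i0 y) i0 v = 0 then (1 : ℝ) else 0) /
      (Fintype.card (∀ j : {j : Fin k // j ≠ i0}, s j.val)) := by
  classical
  set O := ∀ j : {j : Fin k // j ≠ i0}, s j.val
  set e := Equiv.piSplitAt i0 (fun i => (s i : Type))
  have key : ∀ (a : s i0) (y : O),
      (fun i => ((e.symm (a, y) i : V i))) = Function.update (base s i0 y) i0 (a : V i0) := by
    intro a y
    funext j
    by_cases h : j = i0
    · subst h
      simp [e, Equiv.piSplitAt]
    · simp [e, Equiv.piSplitAt, h, Function.update_of_ne h, base]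
  have hsum : (∑ x : ∀ i, s i, chi p (α fun i => (x i : V i)))
      = ∑ y : O, ∑ a : s i0, chi p (α (Function.update (base s i0 y) i0 (a : V i0))) := by
    rw [← Equiv.sum_comp e.symm (fun x : ∀ i, (s i : Type) => chi p (α fun i => (x i : V i)))]
    rw [Fintype.sum_prod_type]
    rw [Finset.sum_comm]
    refine Finset.sum_congr rfl fun y _ => Finset.sum_congr rfl fun a _ => ?_
    rw [key a y]
  have hinner : ∀ y : O,
      (∑ a : s i0, chi p (α (Function.update (base s i0 y) i0 (a : V i0))))
      = if ∀ v ∈ s i0, α.toLinearMap (base s i0 y) i0 v = 0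
          then (Fintype.card (s i0) : ℂ) else 0 := by
    intro y
    have h1 : (∑ a : s i0, chi p (α (Function.update (base s i0 y) i0 (a : V i0))))
        = ∑ w : s i0, chi p (((α.toLinearMap (base s i0 y) i0).comp (s i0).subtype) w) := rfl
    rw [h1, sum_chi]
    refine if_congr ?_ rfl rfl
    constructor
    · intro h v hv; exact h ⟨v, hv⟩
    · intro h w; exact h w.1 w.2
  have hcard : Fintype.card (∀ i, (s i : Type)) = Fintype.card (s i0) * Fintype.card O := by
    rw [Fintype.card_congr e, Fintype.card_prod]
  have hc0 : (Fintype.card (s i0) : ℂ) ≠ 0 := by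
    exact_mod_cast Fintype.card_ne_zero
  unfold B biasF expAvg
  rw [hsum]
  have : (∑ y : O, ∑ a : s i0, chi p (α (Function.update (base s i0 y) i0 (a : V i0))))
      = (Fintype.card (s i0) : ℂ) *
        ∑ y : O, if ∀ v ∈ s i0, α.toLinearMap (base s i0 y) i0 v = 0 then (1 : ℂ) else 0 := by
    rw [Finset.mul_sum]
    refine Finset.sum_congr rfl fun y _ => ?_
    rw [hinner y, mul_ite, mul_one, mul_zero]
  have hre : (∑ y : O, if ∀ v ∈ s i0, α.toLinearMap (base s i0 y) i0 v = 0 then (1 : ℂ) else 0)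
      = ((∑ y : O, if ∀ v ∈ s i0, α.toLinearMap (base s i0 y) i0 v = 0 then (1 : ℝ) else 0 : ℝ) : ℂ) := by
    push_cast [apply_ite (fun r : ℝ => (r : ℂ))]
    rfl
  rw [this, hcard, hre]
  have hcR : (Fintype.card (s i0) : ℝ) ≠ 0 := by exact_mod_cast Fintype.card_ne_zero
  set Nr : ℝ := ∑ y : O, if ∀ v ∈ s i0, α.toLinearMap (base s i0 y) i0 v = 0 then (1 : ℝ) else 0
    with hNr
  have h6 : ((Fintype.card (s i0) : ℂ)) * ((Nr : ℝ) : ℂ)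
        / ((Fintype.card (s i0) * Fintype.card O : ℕ) : ℂ)
      = (((Fintype.card (s i0) * Nr / (Fintype.card (s i0) * Fintype.card O) : ℝ)) : ℂ) := by
    push_cast
    ring
  rw [h6, Complex.ofReal_re, mul_div_mul_left _ _ hcR]

lemma B_step (s : ∀ i, Submodule (ZMod p) (V i)) (i0 : Fin k) (u : Submodule (ZMod p) (V i0))
    (hu : u ≤ s i0) : B α s ≤ B α (Function.update s i0 u) := by
  classical
  rw [B_formula α s i0, B_formula α (Function.update s i0 u) i0]
  set s' := Function.update s i0 u with hs'
  have heq : ∀ j : {j : Fin k // j ≠ i0}, s' j.val = s j.val := fun j =>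
    Function.update_of_ne j.2 u s
  set e2 : (∀ j : {j : Fin k // j ≠ i0}, (s' j.val : Type))
      ≃ (∀ j : {j : Fin k // j ≠ i0}, (s j.val : Type)) :=
    Equiv.piCongrRight fun j => (LinearEquiv.ofEq _ _ (heq j)).toEquiv with he2
  have hbase : ∀ y', base s' i0 y' = base s i0 (e2 y') := by
    intro y'
    funext j
    by_cases h : j = i0
    · subst h; simp [base]
    · simp only [base, dif_neg h, he2, Equiv.piCongrRight_apply, Pi.map_apply,
        LinearEquiv.coe_toEquiv]
      rw [LinearEquiv.coe_ofEq_apply]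
  have hcard : Fintype.card (∀ j : {j : Fin k // j ≠ i0}, (s' j.val : Type))
      = Fintype.card (∀ j : {j : Fin k // j ≠ i0}, (s j.val : Type)) := Fintype.card_congr e2
  rw [hcard]
  rw [← Equiv.sum_comp e2.symm
    (fun y' => if ∀ v ∈ s' i0, α.toLinearMap (base s' i0 y') i0 v = 0 then (1 : ℝ) else 0)]
  have hsi0 : s' i0 = u := Function.update_self i0 u s
  gcongr with y _
  · rw [hbase (e2.symm y), Equiv.apply_symm_apply]
    by_cases hP : ∀ v ∈ s i0, α.toLinearMap (base s i0 y) i0 v = 0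
    · rw [if_pos hP, if_pos fun v hv => hP v (hu (hsi0 ▸ hv))]
    · rw [if_neg hP]
      split <;> norm_num

lemma B_anti (s t : ∀ i, Submodule (ZMod p) (V i)) (h : ∀ i, t i ≤ s i) : B α s ≤ B α t := by
  classical
  set seq : ℕ → ∀ i, Submodule (ZMod p) (V i) :=
    fun m i => if (i : ℕ) < m then t i else s i with hseq
  have h0 : seq 0 = s := by funext i; simp [hseq]
  have hk : seq k = t := by funext i; simp [hseq, i.isLt]
  have hstep : ∀ m, B α (seq m) ≤ B α (seq (m + 1)) := by
    intro m
    by_cases hm : m < k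
    · have hupd : seq (m + 1) = Function.update (seq m) ⟨m, hm⟩ (t ⟨m, hm⟩) := by
        funext i
        by_cases hi : i = (⟨m, hm⟩ : Fin k)
        · subst hi; simp [hseq]
        · rw [Function.update_of_ne hi]
          have hne : (i : ℕ) ≠ m := fun hc => hi (Fin.ext hc)
          simp only [hseq]
          exact if_congr (by omega) rfl rfl
      rw [hupd]
      refine B_step α (seq m) ⟨m, hm⟩ (t ⟨m, hm⟩) ?_
      have hsm : seq m ⟨m, hm⟩ = s ⟨m, hm⟩ := by simp [hseq]
      rw [hsm]
      exact h _
    · have hEq : seq (m + 1) = seq m := by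
        funext i
        have hik := i.isLt
        simp only [hseq]
        exact if_congr (by omega) rfl rfl
      rw [hEq]
  have main : ∀ m, B α (seq 0) ≤ B α (seq m) := by
    intro m
    induction m with
    | zero => exact le_refl _
    | succ n ih => exact ih.trans (hstep n)
  calc B α s = B α (seq 0) := by rw [h0]
    _ ≤ B α (seq k) := main k
    _ = B α t := by rw [hk]

theorem bias_restriction_ge' (U : ∀ i, Submodule (ZMod p) (V i)) [∀ i, Fintype (U i)] :
    biasF (fun x : ∀ i, V i => α x) ≤
      biasF (fun x : ∀ i, U i => α fun i => (x i : V i)) := by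
  have h1 : B α (fun _ => ⊤) = biasF (fun x : ∀ i, V i => α x) := by
    rw [← biasF_comp_equiv
      (Equiv.piCongrRight fun i => (Submodule.topEquiv (R := ZMod p) (M := V i)).toEquiv)
      (fun x : ∀ i, V i => α x)]
    exact biasF_instIrrel _ _ _
  have h2 : B α U = biasF (fun x : ∀ i, U i => α fun i => (x i : V i)) :=
    biasF_instIrrel _ _ _
  rw [← h1, ← h2]
  exact B_anti α (fun _ => ⊤) U (fun i => le_top)

end Main

/-- Restricting a multilinear form to subspaces does not decrease the bias:
if `β` is the restriction of `α : V_1 × ⋯ × V_k → F_p` to `U_1 × ⋯ × U_k` with `U_i ≤ V_i`,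
then `bias β ≥ bias α`. -/
theorem bias_restriction_ge (p k : ℕ) [Fact p.Prime] (V : Fin k → Type)
    [∀ i, AddCommGroup (V i)] [∀ i, Module (ZMod p) (V i)] [∀ i, Fintype (V i)]
    (U : ∀ i, Submodule (ZMod p) (V i)) [∀ i, Fintype (U i)]
    (α : MultilinearMap (ZMod p) V (ZMod p)) :
    biasF (fun x : ∀ i, V i => α x) ≤
      biasF (fun x : ∀ i, U i => α fun i => (x i : V i)) := by
  exact bias_restriction_ge' α U
end

section
/- Let x_1 ≤ … ≤ x_k and y_1 ≤ … ≤ y_k be two nondecreasing sequences of real numbers such that whenever y_j = y_l one also has x_j = x_l. Then for any permutation σ of [k] for which there exists j ∈ [k] with x_{σ(j)} ≠ x_j, one has Σ_{j=1}^k (x_j + y_j)² > Σ_{j=1}^k (x_j + y_{σ(j)})². -/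
open scoped BigOperators


/-- Rearrangement-type inequality: if `x_1 ≤ … ≤ x_k` and `y_1 ≤ … ≤ y_k`
are nondecreasing, equal `y`-values force equal `x`-values, and `σ` is a permutation moving
some value of `x` (i.e. `x (σ j) ≠ x j` for some `j`), then
`∑ (x_j + y_j)² > ∑ (x_j + y_{σ(j)})²`. -/
theorem rearrangement_strict (k : ℕ) (x y : Fin k → ℝ)
    (hx : Monotone x) (hy : Monotone y)
    (hxy : ∀ j l, y j = y l → x j = x l)
    (σ : Equiv.Perm (Fin k)) (hσ : ∃ j, x (σ j) ≠ x j) :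
    ∑ j, (x j + y (σ j)) ^ 2 < ∑ j, (x j + y j) ^ 2 := by
  -- Step 1: there exists j with x (σ j) > x j
  have hsum : ∑ j, x (σ j) = ∑ j, x j := Equiv.sum_comp σ x
  have hgt : ∃ j, x j < x (σ j) := by
    by_contra h
    push_neg at h
    obtain ⟨j₀, hj₀⟩ := hσ
    have hlt : x (σ j₀) < x j₀ := lt_of_le_of_ne (h j₀) hj₀
    have : ∑ j, x (σ j) < ∑ j, x j :=
      Finset.sum_lt_sum (fun i _ => h i) ⟨j₀, Finset.mem_univ _, hlt⟩
    exact absurd hsum (ne_of_lt this)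
  obtain ⟨j, hj⟩ := hgt
  -- Step 2: ¬ Monovary x (y ∘ σ)
  have hnm : ¬ Monovary x (y ∘ σ) := by
    intro M
    -- A = indices i with x i ≤ x j
    set A : Finset (Fin k) := Finset.univ.filter (fun i => x i ≤ x j) with hA
    have hjA : j ∈ A := by simp [hA]
    have hσjA : σ j ∉ A := by simp [hA, not_le.mpr hj]
    -- σ does not map A into A; find i ∉ A with σ i ∈ A
    have : ¬ (A.image σ ⊆ A) := by
      intro hsub
      have hcard : (A.image σ).card = A.card := Finset.card_image_of_injective _ σ.injective
      have heq : A.image σ = A := Finset.eq_of_subset_of_card_le hsub (le_of_eq hcard.symm)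
      have : σ j ∈ A := heq ▸ Finset.mem_image_of_mem σ hjA
      exact hσjA this
    obtain ⟨b, hb, hbA⟩ := Finset.not_subset.mp this
    obtain ⟨i, hiA', hib⟩ := Finset.mem_image.mp hb
    -- We need i ∉ A with σ i ∈ A instead; use inverse counting.
    have : ∃ a ∈ A, a ∉ A.image σ := by
      by_contra h
      push_neg at h
      have hsub : A ⊆ A.image σ := h
      have hcard : (A.image σ).card = A.card := Finset.card_image_of_injective _ σ.injective
      have heq : A = A.image σ := Finset.eq_of_subset_of_card_le hsub (le_of_eq hcard)
      have : σ j ∈ A := heq ▸ Finset.mem_image_of_mem σ hjA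
      exact hσjA this
    obtain ⟨a, haA, haI⟩ := this
    have hiA : σ.symm a ∉ A := by
      intro h
      exact haI (Finset.mem_image.mpr ⟨σ.symm a, h, σ.apply_symm_apply a⟩)
    set i' := σ.symm a with hi'
    have hσi' : σ i' ∈ A := by rw [hi', σ.apply_symm_apply]; exact haA
    -- Now: x i' > x j, x (σ i') ≤ x j < x (σ j)
    have hxi' : x j < x i' := by
      have := hiA; simp [hA] at this; exact this
    have hxσi' : x (σ i') ≤ x j := by
      have := hσi'; simp [hA] at this; exact this
    have hlt2 : x (σ i') < x (σ j) := lt_of_le_of_lt hxσi' hj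
    have hidx : σ i' < σ j := by
      by_contra h
      push_neg at h
      exact absurd (hx h) (not_le.mpr hlt2)
    have hyle : y (σ i') ≤ y (σ j) := hy (le_of_lt hidx)
    have hyne : y (σ i') ≠ y (σ j) := fun h => absurd (hxy _ _ h) (ne_of_lt hlt2)
    have hylt : y (σ i') < y (σ j) := lt_of_le_of_ne hyle hyne
    have := M hylt
    exact absurd this (not_le.mpr hxi')
  -- Step 3: reduce to rearrangement inequality on ∑ x * y∘σ
  have hmono : Monovary x y := hx.monovary hy
  have key : ∑ i, x i * y (σ i) < ∑ i, x i * y i :=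
    (hmono.sum_mul_comp_perm_lt_sum_mul_iff.mpr hnm)
  have hy2 : ∑ i, (y (σ i)) ^ 2 = ∑ i, (y i) ^ 2 := Equiv.sum_comp σ (fun i => (y i) ^ 2)
  have expand : ∀ (z : Fin k → ℝ), ∑ i, (x i + z i) ^ 2
      = ∑ i, (x i) ^ 2 + 2 * ∑ i, x i * z i + ∑ i, (z i) ^ 2 := by
    intro z
    rw [Finset.mul_sum, ← Finset.sum_add_distrib, ← Finset.sum_add_distrib]
    congr 1; ext i; ring
  rw [expand (fun i => y (σ i)), expand y, hy2]
  linarith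
end

section
/- Let k, g, s be positive integers with k ≤ s − g, and let j_1 ≤ j_2 ≤ … ≤ j_k be integers with 0 ≤ j_ι ≤ s − 1 for all ι ∈ [k]. Then there exist integer sequences ℓ_1, …, ℓ_k and a_1, …, a_k such that: j_ι = ℓ_ι + a_ι for each ι; ℓ_1 ≤ ℓ_2 ≤ … ≤ ℓ_k with 0 ≤ ℓ_ι ≤ g − 1 for all ι; a_1 ≤ a_2 ≤ … ≤ a_k with 0 ≤ a_ι ≤ s − g for all ι; and whenever ℓ_{ι₁} > ℓ_{ι₂} one has a_{ι₁} > a_{ι₂}. -/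
open scoped BigOperators


/-- Combinatorial decomposition of an index sequence: for `k ≤ s - g` and
a nondecreasing `j : [k] → {0, …, s-1}`, there are sequences `ℓ` and `a` with
`j = ℓ + a`, `ℓ` nondecreasing with values in `{0, …, g-1}`, `a` nondecreasing with values
in `{0, …, s-g}`, and `ℓ_{ι₁} > ℓ_{ι₂} → a_{ι₁} > a_{ι₂}`. -/
theorem index_decomposition (k g s : ℕ) (hk : 0 < k) (hg : 0 < g) (hs : 0 < s)
    (hks : (k : ℤ) ≤ (s : ℤ) - (g : ℤ))
    (j : Fin k → ℤ) (hmono : Monotone j)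
    (hj : ∀ ι, 0 ≤ j ι ∧ j ι ≤ (s : ℤ) - 1) :
    ∃ l a : Fin k → ℤ,
      (∀ ι, j ι = l ι + a ι) ∧
      Monotone l ∧ (∀ ι, 0 ≤ l ι ∧ l ι ≤ (g : ℤ) - 1) ∧
      Monotone a ∧ (∀ ι, 0 ≤ a ι ∧ a ι ≤ (s : ℤ) - (g : ℤ)) ∧
      (∀ ι₁ ι₂, l ι₂ < l ι₁ → a ι₂ < a ι₁) := by
  classical
  set S : Finset ℤ := Finset.univ.image j with hS
  set r : ℤ → ℤ := fun v => ((S.filter (fun w => w < v)).card : ℤ) with hr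
  -- r is monotone
  have hr_mono : ∀ v₁ v₂ : ℤ, v₁ ≤ v₂ → r v₁ ≤ r v₂ := by
    intro v₁ v₂ h
    simp only [hr]
    have hsub : S.filter (fun w => w < v₁) ⊆ S.filter (fun w => w < v₂) := by
      intro w hw
      simp only [Finset.mem_filter] at hw ⊢
      exact ⟨hw.1, lt_of_lt_of_le hw.2 h⟩
    exact_mod_cast Finset.card_le_card hsub
  -- r is 1-Lipschitz above
  have hr_lip : ∀ v₁ v₂ : ℤ, v₁ ≤ v₂ → r v₂ - r v₁ ≤ v₂ - v₁ := by
    intro v₁ v₂ h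
    have hsub : S.filter (fun w => w < v₂) ⊆
        S.filter (fun w => w < v₁) ∪ Finset.Ico v₁ v₂ := by
      intro w hw
      simp only [Finset.mem_filter] at hw
      rcases lt_or_ge w v₁ with h1 | h1
      · exact Finset.mem_union_left _ (Finset.mem_filter.mpr ⟨hw.1, h1⟩)
      · exact Finset.mem_union_right _ (Finset.mem_Ico.mpr ⟨h1, hw.2⟩)
    have := Finset.card_le_card hsub
    have := this.trans (Finset.card_union_le _ _)
    have hIco : ((Finset.Ico v₁ v₂).card : ℤ) = v₂ - v₁ := by
      rw [Int.card_Ico]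
      exact Int.toNat_of_nonneg (by omega)
    have : ((S.filter (fun w => w < v₂)).card : ℤ) ≤
        ((S.filter (fun w => w < v₁)).card : ℤ) + (v₂ - v₁) := by
      push_cast
      rw [← hIco]
      exact_mod_cast this
    simp only [hr]
    omega
  -- r (j ι) ≤ j ι
  have hr_le_j : ∀ ι, r (j ι) ≤ j ι := by
    intro ι
    have hsub : S.filter (fun w => w < j ι) ⊆ Finset.Ico 0 (j ι) := by
      intro w hw
      simp only [Finset.mem_filter, hS, Finset.mem_image] at hw
      obtain ⟨⟨ι', _, rfl⟩, h2⟩ := hw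
      exact Finset.mem_Ico.mpr ⟨(hj ι').1, h2⟩
    have := Finset.card_le_card hsub
    have hIco : ((Finset.Ico (0:ℤ) (j ι)).card : ℤ) = j ι := by
      rw [Int.card_Ico]
      have := (hj ι).1
      omega
    simp only [hr]
    calc ((S.filter (fun w => w < j ι)).card : ℤ)
        ≤ ((Finset.Ico (0:ℤ) (j ι)).card : ℤ) := by exact_mod_cast this
      _ = j ι := hIco
  -- r (j ι) ≤ k - 1
  have hr_le_k : ∀ ι, r (j ι) ≤ (k : ℤ) - 1 := by
    intro ι
    have hsub : S.filter (fun w => w < j ι) ⊆ S.erase (j ι) := by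
      intro w hw
      simp only [Finset.mem_filter] at hw
      exact Finset.mem_erase.mpr ⟨ne_of_lt hw.2, hw.1⟩
    have h1 := Finset.card_le_card hsub
    have hmem : j ι ∈ S := by
      simp only [hS, Finset.mem_image]
      exact ⟨ι, Finset.mem_univ _, rfl⟩
    have h2 : (S.erase (j ι)).card = S.card - 1 := Finset.card_erase_of_mem hmem
    have h3 : S.card ≤ k := by
      calc S.card ≤ (Finset.univ : Finset (Fin k)).card := Finset.card_image_le
        _ = k := by simp
    have h4 : 1 ≤ S.card := Finset.card_pos.mpr ⟨j ι, hmem⟩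
    simp only [hr]
    omega
  -- strict: j ι₂ < j ι₁ → r (j ι₂) < r (j ι₁)
  have hr_strict : ∀ ι₁ ι₂ : Fin k, j ι₂ < j ι₁ → r (j ι₂) < r (j ι₁) := by
    intro ι₁ ι₂ h
    have hss : S.filter (fun w => w < j ι₂) ⊂ S.filter (fun w => w < j ι₁) := by
      constructor
      · intro w hw
        simp only [Finset.mem_filter] at hw ⊢
        exact ⟨hw.1, lt_trans hw.2 h⟩
      · intro hcon
        have hmem : j ι₂ ∈ S.filter (fun w => w < j ι₁) := by
          refine Finset.mem_filter.mpr ⟨?_, h⟩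
          simp only [hS, Finset.mem_image]
          exact ⟨ι₂, Finset.mem_univ _, rfl⟩
        have := hcon hmem
        simp only [Finset.mem_filter] at this
        exact absurd this.2 (lt_irrefl _)
    simp only [hr]
    exact_mod_cast Finset.card_lt_card hss
  -- the construction
  refine ⟨fun ι => j ι - max (r (j ι)) (j ι - ((g : ℤ) - 1)),
         fun ι => max (r (j ι)) (j ι - ((g : ℤ) - 1)), ?_, ?_, ?_, ?_, ?_, ?_⟩
  · intro ι; ring
  · -- Monotone l
    intro ι₁ ι₂ h
    dsimp only
    have h1 : r (j ι₁) ≤ max (r (j ι₁)) (j ι₁ - ((g:ℤ)-1)) := le_max_left _ _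
    have h1' : j ι₁ - ((g:ℤ)-1) ≤ max (r (j ι₁)) (j ι₁ - ((g:ℤ)-1)) := le_max_right _ _
    have h2 := hr_lip (j ι₁) (j ι₂) (hmono h)
    rcases le_total (r (j ι₂)) (j ι₂ - ((g:ℤ)-1)) with hc | hc
    · rw [max_eq_right hc]; omega
    · rw [max_eq_left hc]; omega
  · intro ι
    dsimp only
    have h1 := hr_le_j ι
    have hg' : (1:ℤ) ≤ (g:ℤ) := by exact_mod_cast hg
    have h2 : j ι - ((g:ℤ)-1) ≤ j ι := by omega
    have h3 := max_le h1 h2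
    have h4 : j ι - ((g:ℤ)-1) ≤ max (r (j ι)) (j ι - ((g:ℤ)-1)) := le_max_right _ _
    omega
  · -- Monotone a
    intro ι₁ ι₂ h
    exact max_le_max (hr_mono _ _ (hmono h)) (by have := hmono h; omega)
  · intro ι
    constructor
    · have : (0:ℤ) ≤ r (j ι) := by simp only [hr]; positivity
      exact le_trans this (le_max_left _ _)
    · refine max_le ?_ ?_
      · have := hr_le_k ι; omega
      · have := (hj ι).2; omega
  · -- strict increase
    intro ι₁ ι₂ hl
    simp only at hl ⊢
    have hjlt : j ι₂ < j ι₁ := by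
      by_contra hcon
      push_neg at hcon
      -- j ι₁ ≤ j ι₂
      have h1 := hr_mono _ _ hcon
      have : max (r (j ι₁)) (j ι₁ - ((g:ℤ)-1)) ≤ max (r (j ι₂)) (j ι₂ - ((g:ℤ)-1)) :=
        max_le_max h1 (by omega)
      -- need l ι₂ ≥ l ι₁, i.e. contradiction with hl
      have h2 : r (j ι₁) ≤ max (r (j ι₁)) (j ι₁ - ((g:ℤ)-1)) := le_max_left _ _
      have h3 : j ι₁ - ((g:ℤ)-1) ≤ max (r (j ι₁)) (j ι₁ - ((g:ℤ)-1)) := le_max_right _ _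
      have h4 := hr_lip (j ι₁) (j ι₂) hcon
      have h5 : j ι₁ - max (r (j ι₁)) (j ι₁ - ((g:ℤ)-1)) ≤
          j ι₂ - max (r (j ι₂)) (j ι₂ - ((g:ℤ)-1)) := by
        rcases le_total (r (j ι₂)) (j ι₂ - ((g:ℤ)-1)) with hc | hc
        · rw [max_eq_right hc]; omega
        · rw [max_eq_left hc]; omega
      omega
    have h1 := hr_strict ι₁ ι₂ hjlt
    exact max_lt_max h1 (by omega)
end

section
/- Let p be a prime, let k, d, m, g, r be positive integers with g·d ≤ m and d > k g^k r, and let W ⊆ G_m^k be a multilinear variety which is the common zero set of at most r multilinear forms, each depending on the variables indexed by some nonempty subset of [k]. Then there exists a nonzero polynomial w ∈ G_d such that for every tuple (i_1, …, i_k) ∈ {0, 1, …, g−1}^k, the tuple (w·t^{i_1 d}, w·t^{i_2 d}, …, w·t^{i_k d}) lies in W. -/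
open scoped BigOperators

/-- `Gn p n` is the space of polynomials over `F_p` of degree at most `n - 1`,
an `n`-dimensional `F_p`-vector space. -/
abbrev Gn (p n : ℕ) : Type := Polynomial.degreeLT (ZMod p) n

noncomputable instance (p n : ℕ) [NeZero p] : Fintype (Gn p n) :=
  Fintype.ofEquiv (Fin n → ZMod p) (Polynomial.degreeLTEquiv (ZMod p) n).toEquiv.symm

/-- Multiplication of polynomials, landing in `Gn p n` (the hypotheses of the statements
below always guarantee that the degree of the product is indeed `< n`, so the junk value
in the `else` branch is never used). -/
noncomputable def mulG (p n : ℕ) (a x : Polynomial (ZMod p)) : Gn p n :=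
  if h : (a * x).degree < (n : WithBot ℕ) then ⟨a * x, Polynomial.mem_degreeLT.mpr h⟩ else 0

section Aux

variable {k : ℕ} {V : Type*}

/-- Extend a function on `J` to all of `Fin k` by zero. -/
def extendJ [Zero V] (J : Finset (Fin k)) (x : ↥J → V) : Fin k → V :=
  fun i => if h : i ∈ J then x ⟨i, h⟩ else 0

lemma extendJ_update [Zero V] (J : Finset (Fin k)) [DecidableEq ↥J]
    (x : ↥J → V) (s : ↥J) (a : V) :
    extendJ J (Function.update x s a) = Function.update (extendJ J x) (s : Fin k) a := by
  funext i
  by_cases h : i ∈ J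
  · by_cases hs : (⟨i, h⟩ : ↥J) = s
    · have hi : i = (s : Fin k) := by rw [← hs]
      subst hi
      simp [extendJ, h, hs]
    · have hi : i ≠ (s : Fin k) := fun hh => hs (Subtype.ext hh)
      simp [extendJ, h, Function.update_of_ne hs, Function.update_of_ne hi]
  · have hi : i ≠ (s : Fin k) := fun hh => h (hh ▸ s.2)
    simp [extendJ, h, Function.update_of_ne hi]

lemma extendJ_agree [Zero V] (J : Finset (Fin k)) (x : Fin k → V) (i : Fin k) (hi : i ∈ J) :
    x i = extendJ J (fun s => x ↑s) i := by
  simp [extendJ, hi]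

/-- Package a function that is multilinear in the coordinates indexed by `J` as a bona fide
multilinear map on `↥J → V`. -/
noncomputable def restrictML (p : ℕ) [AddCommMonoid V] [Module (ZMod p) V]
    (J : Finset (Fin k)) (f : (Fin k → V) → ZMod p)
    (hf : IsMultilinearIn p (U := fun _ => V) J f) :
    MultilinearMap (ZMod p) (fun _ : ↥J => V) (ZMod p) where
  toFun x := f (extendJ J x)
  map_update_add' := by
    intro inst x s a b
    rw [extendJ_update, extendJ_update, extendJ_update]
    exact (hf.2 s s.2).1 (extendJ J x) a b
  map_update_smul' := by
    intro inst x s c a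
    rw [extendJ_update, extendJ_update]
    rw [smul_eq_mul]
    exact (hf.2 s s.2).2 (extendJ J x) c a

lemma restrictML_eq (p : ℕ) [AddCommMonoid V] [Module (ZMod p) V]
    (J : Finset (Fin k)) (f : (Fin k → V) → ZMod p)
    (hf : IsMultilinearIn p (U := fun _ => V) J f) (x : Fin k → V) :
    f x = restrictML p J f hf (fun s => x ↑s) := by
  exact hf.1 x (extendJ J fun s => x ↑s) (extendJ_agree J x)

end Aux

/-- (Chevalley–Warning application.) If `g d ≤ m`, `d > k g^k r` and
`W ⊆ G_m^k` is a multilinear variety cut out by at most `r` multilinear forms, then there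
is a nonzero `w ∈ G_d` such that `(w t^{i₁ d}, …, w t^{i_k d}) ∈ W` for every choice of
exponents `i_1, …, i_k ∈ {0, …, g-1}`. -/
theorem chevalley_warning_common_point (p : ℕ) [Fact p.Prime] (k d m g r : ℕ)
    (hk : 0 < k) (hd : 0 < d) (hm : 0 < m) (hg : 0 < g) (hr : 0 < r)
    (hgd : g * d ≤ m) (hdr : k * g ^ k * r < d)
    (W : Set (Fin k → Gn p m)) (hW : IsMLVariety p r W) :
    ∃ w : Gn p d, w ≠ 0 ∧
      ∀ i : Fin k → Fin g,
        (fun j => mulG p m (w : Polynomial (ZMod p))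
          (Polynomial.X ^ ((i j : ℕ) * d))) ∈ W := by
  classical
  obtain ⟨J, f, hJf, hWeq⟩ := hW
  -- the multilinear maps
  let F : (j : Fin r) → MultilinearMap (ZMod p) (fun _ : ↥(J j) => Gn p m) (ZMod p) :=
    fun j => restrictML p (J j) (f j) (hJf j).2
  -- degrees fit
  have hvec : ∀ (i : Fin g) (a : Fin d), (a : ℕ) + (i : ℕ) * d < m := by
    intro i a
    have h1 : (a : ℕ) + (i : ℕ) * d < ((i : ℕ) + 1) * d := by
      rw [add_mul, one_mul]; have := a.2; omega
    have h2 : ((i : ℕ) + 1) * d ≤ g * d :=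
      Nat.mul_le_mul_right d (by have := i.2; omega)
    omega
  -- monomials as elements of Gn p m
  have hxpowmem : ∀ n : ℕ, n < m → (Polynomial.X ^ n : Polynomial (ZMod p)) ∈
      Polynomial.degreeLT (ZMod p) m := by
    intro n hn
    rw [Polynomial.mem_degreeLT, Polynomial.degree_X_pow]
    exact_mod_cast hn
  let vec : (Fin k → Fin g) → Fin k → Fin d → Gn p m :=
    fun i s a => ⟨Polynomial.X ^ ((a : ℕ) + (i s : ℕ) * d), hxpowmem _ (hvec (i s) a)⟩
  -- the polynomial family
  let P : (Fin r × (Fin k → Fin g)) → MvPolynomial (Fin d) (ZMod p) :=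
    fun ji => ∑ α : ↥(J ji.1) → Fin d,
      MvPolynomial.C (F ji.1 (fun s => vec ji.2 ↑s (α s))) * ∏ s, MvPolynomial.X (α s)
  -- total degree bound
  have hdeg : ∀ ji, (P ji).totalDegree ≤ k := by
    intro ji
    refine (MvPolynomial.totalDegree_finset_sum _ _).trans (Finset.sup_le ?_)
    intro α _
    refine (MvPolynomial.totalDegree_mul _ _).trans ?_
    rw [MvPolynomial.totalDegree_C, zero_add]
    refine (MvPolynomial.totalDegree_finset_prod _ _).trans ?_
    calc ∑ s : ↥(J ji.1), (MvPolynomial.X (α s) : MvPolynomial (Fin d) (ZMod p)).totalDegree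
        = ∑ s : ↥(J ji.1), 1 := by simp [MvPolynomial.totalDegree_X]
      _ = (J ji.1).card := by simp
      _ ≤ k := by simpa using Finset.card_le_univ (J ji.1)
  have hsum : ∑ ji : Fin r × (Fin k → Fin g), (P ji).totalDegree < Fintype.card (Fin d) := by
    rw [Fintype.card_fin]
    calc ∑ ji : Fin r × (Fin k → Fin g), (P ji).totalDegree
        ≤ ∑ _ji : Fin r × (Fin k → Fin g), k := Finset.sum_le_sum fun ji _ => hdeg ji
      _ = (r * g ^ k) * k := by
          simp [Finset.sum_const, Fintype.card_prod, Fintype.card_fun, mul_comm]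
      _ = k * g ^ k * r := by ring
      _ < d := hdr
  -- Chevalley–Warning
  have hCW : p ∣ Fintype.card
      { x : Fin d → ZMod p // ∀ ji, MvPolynomial.eval x (P ji) = 0 } :=
    char_dvd_card_solutions_of_fintype_sum_lt p hsum
  -- zero is a solution
  have hzero : ∀ ji, MvPolynomial.eval (0 : Fin d → ZMod p) (P ji) = 0 := by
    intro ji
    have hne : Nonempty ↥(J ji.1) := Finset.Nonempty.coe_sort (hJf ji.1).1
    have hcard : 0 < Fintype.card ↥(J ji.1) := Fintype.card_pos
    simp only [P, map_sum, map_mul, MvPolynomial.eval_C, map_prod, MvPolynomial.eval_X,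
      Pi.zero_apply]
    rw [Finset.sum_eq_zero]
    intro α _
    rw [Finset.prod_const, zero_pow (by simpa using hcard.ne')]
    ring
  -- there are at least two solutions
  have h1 : 1 < Fintype.card { x : Fin d → ZMod p // ∀ ji, MvPolynomial.eval x (P ji) = 0 } := by
    have hpos : 0 < Fintype.card { x : Fin d → ZMod p // ∀ ji, MvPolynomial.eval x (P ji) = 0 } :=
      Fintype.card_pos_iff.mpr ⟨⟨0, hzero⟩⟩
    have hp2 : 2 ≤ p := (Fact.out : p.Prime).two_le
    have := Nat.le_of_dvd hpos hCW
    omega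
  obtain ⟨c, hc⟩ := Fintype.exists_ne_of_one_lt_card h1 ⟨0, hzero⟩
  have hc0 : c.1 ≠ 0 := fun h => hc (Subtype.ext h)
  -- build w from the solution c
  let w : Gn p d := ∑ a : Fin d, c.1 a •
    (⟨Polynomial.X ^ (a : ℕ), by
        rw [Polynomial.mem_degreeLT, Polynomial.degree_X_pow]
        exact_mod_cast a.2⟩ : Gn p d)
  have hwcoe : (w : Polynomial (ZMod p)) = ∑ a : Fin d, c.1 a • Polynomial.X ^ (a : ℕ) := by
    simp [w]
  have hcoeff : ∀ b : Fin d, (w : Polynomial (ZMod p)).coeff b = c.1 b := by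
    intro b
    rw [hwcoe, Polynomial.finset_sum_coeff]
    rw [Finset.sum_eq_single b]
    · simp [Polynomial.coeff_smul, Polynomial.coeff_X_pow]
    · intro a _ hab
      have : ¬ ((b : ℕ) = (a : ℕ)) := fun h => hab (Fin.ext h.symm)
      simp [Polynomial.coeff_smul, Polynomial.coeff_X_pow, this]
    · simp
  refine ⟨w, ?_, ?_⟩
  · intro h0
    obtain ⟨b, hb⟩ := Function.ne_iff.mp hc0
    apply hb
    rw [← hcoeff b, h0]
    simp
  · intro i
    rw [hWeq]
    intro j
    -- compute the product `w * X ^ (i s * d)` inside `Gn p m`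
    have hmul : ∀ s : Fin k, mulG p m (w : Polynomial (ZMod p))
        (Polynomial.X ^ ((i s : ℕ) * d)) = ∑ a : Fin d, c.1 a • vec i s a := by
      intro s
      have heq : (w : Polynomial (ZMod p)) * Polynomial.X ^ ((i s : ℕ) * d)
          = ∑ a : Fin d, c.1 a • Polynomial.X ^ ((a : ℕ) + (i s : ℕ) * d) := by
        rw [hwcoe, Finset.sum_mul]
        refine Finset.sum_congr rfl fun a _ => ?_
        rw [smul_mul_assoc, ← pow_add]
      have hmem : (w : Polynomial (ZMod p)) * Polynomial.X ^ ((i s : ℕ) * d)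
          ∈ Polynomial.degreeLT (ZMod p) m := by
        rw [heq]
        exact Submodule.sum_mem _ fun a _ =>
          Submodule.smul_mem _ _ (hxpowmem _ (hvec (i s) a))
      rw [mulG, dif_pos (Polynomial.mem_degreeLT.mp hmem)]
      apply Subtype.ext
      simp only [vec]
      rw [heq]
      simp
    have hres := restrictML_eq p (J j) (f j) (hJf j).2
      (fun s => mulG p m (w : Polynomial (ZMod p)) (Polynomial.X ^ ((i s : ℕ) * d)))
    rw [hres]
    have hrw : (fun s : ↥(J j) => mulG p m (w : Polynomial (ZMod p))
        (Polynomial.X ^ ((i (↑s) : ℕ) * d))) = fun s : ↥(J j) => ∑ a : Fin d, c.1 a • vec i ↑s a := by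
      funext s; exact hmul ↑s
    rw [hrw]
    rw [MultilinearMap.map_sum (restrictML p (J j) (f j) (hJf j).2)
      (fun s a => c.1 a • vec i ↑s a)]
    have hterm : ∀ α : ↥(J j) → Fin d,
        (restrictML p (J j) (f j) (hJf j).2 fun s => c.1 (α s) • vec i ↑s (α s))
          = (∏ s : ↥(J j), c.1 (α s)) * F j (fun s => vec i ↑s (α s)) := by
      intro α
      rw [MultilinearMap.map_smul_univ]
      rfl
    rw [Finset.sum_congr rfl fun α _ => hterm α]
    have hevalP : MvPolynomial.eval c.1 (P (j, i)) = 0 := c.2 (j, i)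
    refine Eq.trans ?_ hevalP
    simp only [P, map_sum, map_mul, MvPolynomial.eval_C, map_prod, MvPolynomial.eval_X]
    exact Finset.sum_congr rfl fun α _ => by ring
end
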